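/- arXiv:2209.12175 — 2 statements merged into one kernel-verified Lean document; each statement's English description precedes it below -/
import Mathlib

section
/- Let M be the (k+l)×(k+l) block matrix M = [[0, M₁],[M₂, 0]] with (M₁)ᵢⱼ = m₁(i)m₂(k+j), (M₂)ᵢⱼ = m₁(k+i)m₂(j), μ₁ = Σ_{i=1}^{k} m₁(i)m₂(i), μ₂ = Σ_{i=k+1}^{k+l} m₁(i)m₂(i). Then det(I + tM) = 1 − μ₁μ₂t² for every t ∈ ℂ. -/
open Matrix

/-!
Taking the Schur complement of the lower identity block of `I + t M = [[I, t M₁], [t M₂, I]]`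
gives `det (I + t M) = det (I - t² M₁ M₂)`. With `M₁ = u vᵀ` and `M₂ = w xᵀ` of rank one,
`M₁ M₂ = (v ⬝ w) u xᵀ` is again of rank one, and the matrix determinant lemma
`det (I + a bᵀ) = 1 + b ⬝ a` finishes the computation.
-/

namespace Matrix

variable {m n R : Type*} [DecidableEq m] [DecidableEq n] [CommRing R]

theorem one_add_smul_fromBlocks_zero_zero (t : R) (B : Matrix m n R) (C : Matrix n m R) :
    1 + t • fromBlocks 0 B C 0 = fromBlocks 1 (t • B) (t • C) 1 := by
  rw [← fromBlocks_one, fromBlocks_smul, fromBlocks_add]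
  simp only [smul_zero, add_zero, zero_add]

variable [Fintype m] [Fintype n]

theorem det_one_add_vecMulVec (u v : m → R) : det (1 + vecMulVec u v) = 1 + v ⬝ᵥ u := by
  rw [vecMulVec_eq (ι := Unit), det_one_add_replicateCol_mul_replicateRow]

theorem det_one_add_smul_fromBlocks_zero_zero (t : R) (B : Matrix m n R) (C : Matrix n m R) :
    det (1 + t • fromBlocks 0 B C 0) = det (1 - t ^ 2 • (B * C)) := by
  rw [one_add_smul_fromBlocks_zero_zero, det_fromBlocks_one₂₂, Matrix.smul_mul, Matrix.mul_smul,
    smul_smul, sq]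

theorem det_one_add_smul_fromBlocks_vecMulVec (t : R) (u x : m → R) (v w : n → R) :
    det (1 + t • fromBlocks 0 (vecMulVec u v) (vecMulVec w x) 0) =
      1 - (u ⬝ᵥ x) * (w ⬝ᵥ v) * t ^ 2 := by
  rw [det_one_add_smul_fromBlocks_zero_zero, vecMulVec_mul_vecMulVec, ← vecMulVec_smul,
    sub_eq_add_neg, ← vecMulVec_neg, det_one_add_vecMulVec, neg_dotProduct, smul_dotProduct,
    smul_dotProduct, dotProduct_comm x, dotProduct_comm v, smul_eq_mul, smul_eq_mul]
  ring

end Matrix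

theorem block_antidiagonal_det (k l : ℕ) (m₁ m₂ : Fin k ⊕ Fin l → ℂ)
    (M₁ : Matrix (Fin k) (Fin l) ℂ) (hM₁ : ∀ i j, M₁ i j = m₁ (.inl i) * m₂ (.inr j))
    (M₂ : Matrix (Fin l) (Fin k) ℂ) (hM₂ : ∀ i j, M₂ i j = m₁ (.inr i) * m₂ (.inl j))
    (μ₁ μ₂ : ℂ)
    (hμ₁ : μ₁ = ∑ i : Fin k, m₁ (.inl i) * m₂ (.inl i))
    (hμ₂ : μ₂ = ∑ i : Fin l, m₁ (.inr i) * m₂ (.inr i))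
    (t : ℂ) :
    (1 + t • Matrix.fromBlocks 0 M₁ M₂ 0).det = 1 - μ₁ * μ₂ * t ^ 2 := by
  have hM₁ : M₁ = vecMulVec (m₁ ∘ .inl) (m₂ ∘ .inr) := Matrix.ext hM₁
  have hM₂ : M₂ = vecMulVec (m₁ ∘ .inr) (m₂ ∘ .inl) := Matrix.ext hM₂
  rw [hM₁, hM₂, det_one_add_smul_fromBlocks_vecMulVec, hμ₁, hμ₂]
  rfl
end

section
/- Let M be the (k+l)×(k+l) block matrix M = [[0, M₁],[M₂, 0]] with (M₁)ᵢⱼ = m₁(i)m₂(k+j), (M₂)ᵢⱼ = m₁(k+i)m₂(j), μ₁ = Σ_{i=1}^{k} m₁(i)m₂(i), μ₂ = Σ_{i=k+1}^{k+l} m₁(i)m₂(i). If t ∈ ℂ satisfies μ₁μ₂t² ≠ 1, then (I + tM)⁻¹ = I − t(1 − μ₁μ₂t²)⁻¹M + t²(1 − μ₁μ₂t²)⁻¹M². -/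
/-!
Since `M₁` and `M₂` have rank one, `M₁ M₂ M₁ = μ₁ μ₂ M₁` and `M₂ M₁ M₂ = μ₁ μ₂ M₂`, so the
anti-diagonal block matrix satisfies `M³ = μ₁ μ₂ M`. For any `a` with `a³ = c a` the product
`(1 + t a)(1 - t d a + t² d a²)` with `d = (1 - c t²)⁻¹` collapses to `1`.
-/

open Matrix

theorem mul_one_sub_smul_add_smul_sq_eq_one {K A : Type*} [Field K] [Ring A] [Algebra K A]
    {a : A} {c t : K} (ha : a ^ 3 = c • a) (h : c * t ^ 2 ≠ 1) :
    (1 + t • a) * (1 - (t * (1 - c * t ^ 2)⁻¹) • a + (t ^ 2 * (1 - c * t ^ 2)⁻¹) • a ^ 2) = 1 := by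
  set d := (1 - c * t ^ 2)⁻¹
  have hcoeff : t - t * d + t ^ 3 * d * c = 0 := by
    linear_combination (-t) * mul_inv_cancel₀ (sub_ne_zero.mpr h.symm)
  calc (1 + t • a) * (1 - (t * d) • a + (t ^ 2 * d) • a ^ 2)
      = 1 + (t - t * d) • a + (t ^ 3 * d) • a ^ 3 := by
        simp only [add_mul, mul_add, mul_sub, one_mul, mul_one, smul_mul_smul_comm,
          ← sq, ← pow_succ']
        module
    _ = 1 := by rw [ha, smul_smul, add_assoc, ← add_smul, hcoeff, zero_smul, add_zero]

theorem fromBlocks_zero_zero_pow_three {m n α : Type*} [Fintype m] [Fintype n]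
    [DecidableEq m] [DecidableEq n] [Semiring α] (B : Matrix m n α) (C : Matrix n m α) :
    fromBlocks 0 B C 0 ^ 3 = fromBlocks 0 (B * C * B) (C * B * C) 0 := by
  simp [pow_three, fromBlocks_multiply, Matrix.mul_assoc]

theorem vecMulVec_mul_vecMulVec_mul_vecMulVec {l m α : Type*} [Fintype l] [Fintype m]
    [CommSemiring α] (u : l → α) (v w : m → α) (x : l → α) :
    vecMulVec u v * vecMulVec w x * vecMulVec u v = ((v ⬝ᵥ w) * (x ⬝ᵥ u)) • vecMulVec u v := by
  rw [vecMulVec_mul_vecMulVec, vecMulVec_mul_vecMulVec, smul_dotProduct, smul_eq_mul,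
    vecMulVec_smul]

theorem block_antidiagonal_inv (k l : ℕ) (m₁ m₂ : Fin k ⊕ Fin l → ℂ)
    (M₁ : Matrix (Fin k) (Fin l) ℂ) (hM₁ : ∀ i j, M₁ i j = m₁ (.inl i) * m₂ (.inr j))
    (M₂ : Matrix (Fin l) (Fin k) ℂ) (hM₂ : ∀ i j, M₂ i j = m₁ (.inr i) * m₂ (.inl j))
    (M : Matrix (Fin k ⊕ Fin l) (Fin k ⊕ Fin l) ℂ)
    (hM : M = Matrix.fromBlocks 0 M₁ M₂ 0)
    (μ₁ μ₂ : ℂ)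
    (hμ₁ : μ₁ = ∑ i : Fin k, m₁ (.inl i) * m₂ (.inl i))
    (hμ₂ : μ₂ = ∑ i : Fin l, m₁ (.inr i) * m₂ (.inr i))
    (t : ℂ) (ht : μ₁ * μ₂ * t ^ 2 ≠ 1) :
    (1 + t • M)⁻¹ =
      1 - (t * (1 - μ₁ * μ₂ * t ^ 2)⁻¹) • M
        + (t ^ 2 * (1 - μ₁ * μ₂ * t ^ 2)⁻¹) • (M ^ 2) := by
  have hM₁' : M₁ = vecMulVec (m₁ ∘ .inl) (m₂ ∘ .inr) := ext hM₁
  have hM₂' : M₂ = vecMulVec (m₁ ∘ .inr) (m₂ ∘ .inl) := ext hM₂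
  have hμ₁' : μ₁ = (m₁ ∘ .inl) ⬝ᵥ (m₂ ∘ .inl) := hμ₁
  have hμ₂' : μ₂ = (m₁ ∘ .inr) ⬝ᵥ (m₂ ∘ .inr) := hμ₂
  have hcube : M ^ 3 = (μ₁ * μ₂) • M := by
    rw [hM, fromBlocks_zero_zero_pow_three, hM₁', hM₂', vecMulVec_mul_vecMulVec_mul_vecMulVec,
      vecMulVec_mul_vecMulVec_mul_vecMulVec, fromBlocks_smul, dotProduct_comm _ (m₁ ∘ _),
      dotProduct_comm _ (m₁ ∘ _), ← hμ₁', ← hμ₂', mul_comm μ₂, smul_zero, smul_zero]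
  exact inv_eq_right_inv (mul_one_sub_smul_add_smul_sq_eq_one hcube ht)
end
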